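/- Let F_a(x) = ₃F₂(1, c, q; a, b; x), viewed as a function of the lower parameter a. Then (a−2)(a−1)(1−x)·F_{a−2}(x) + (a−1)((2a−c−q−3)x − a + b + 1)·F_{a−1}(x) − (a−q−1)(a−c−1)x·F_a(x) = (a−1)(b−1), as an identity of formal power series in x (or for |x|<1). -/
import Mathlib

noncomputable def poch (a : ℝ) (n : ℕ) : ℝ := (ascPochhammer ℝ n).eval a

/-- Generalized hypergeometric series ₃F₂(a,b,c; d,e; x). -/
noncomputable def F32 (a b c d e x : ℝ) : ℝ :=
  ∑' n : ℕ, (poch a n * poch b n * poch c n) / (poch d n * poch e n * (n.factorial : ℝ)) * x ^ n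

/-- `x` is not a non-positive integer. -/
def NotNonposInt (x : ℝ) : Prop := ∀ m : ℕ, x ≠ -(m : ℝ)

lemma poch_zero' (d : ℝ) : poch d 0 = 1 := by simp [poch]

lemma poch_succ (d : ℝ) (n : ℕ) : poch d (n+1) = poch d n * (d + n) := by
  simp [poch, ascPochhammer_succ_right]

lemma poch_shift (d : ℝ) (n : ℕ) : poch d n * (d + n) = d * poch (d+1) n := by
  rw [← poch_succ]; simp [poch, ascPochhammer_succ_left, Polynomial.eval_comp]

lemma poch_one_eq (n : ℕ) : poch 1 n = n.factorial := by
  induction n with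
  | zero => simp [poch_zero']
  | succ n ih => rw [poch_succ, ih, Nat.factorial_succ]; push_cast; ring

lemma add_nat_ne_zero {d : ℝ} (hd : NotNonposInt d) (n : ℕ) : d + n ≠ 0 := by
  intro h; exact hd n (by linarith)

lemma poch_ne_zero {d : ℝ} (hd : NotNonposInt d) (n : ℕ) : poch d n ≠ 0 := by
  induction n with
  | zero => simp [poch_zero']
  | succ n ih => rw [poch_succ]; exact mul_ne_zero ih (add_nat_ne_zero hd n)

lemma self_ne_zero {d : ℝ} (hd : NotNonposInt d) : d ≠ 0 := by
  have := hd 0; simpa using this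

lemma ratio_tendsto (c d : ℝ) (hd : NotNonposInt d) :
    Filter.Tendsto (fun n : ℕ => (c + n) / (d + n)) Filter.atTop (nhds 1) := by
  have h1 : Filter.Tendsto (fun n : ℕ => d + (n:ℝ)) Filter.atTop Filter.atTop :=
    Filter.tendsto_atTop_add_const_left _ d tendsto_natCast_atTop_atTop
  have h2 : Filter.Tendsto (fun n : ℕ => (d + (n:ℝ))⁻¹) Filter.atTop (nhds 0) :=
    h1.inv_tendsto_atTop
  have h3 : Filter.Tendsto (fun n : ℕ => 1 + (c - d) * (d + (n:ℝ))⁻¹) Filter.atTop (nhds 1) := by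
    have := (h2.const_mul (c - d)).const_add 1
    simpa using this
  refine h3.congr (fun n => ?_)
  have hdn := add_nat_ne_zero hd n
  field_simp
  ring

lemma summable_u {b c q d : ℝ} (hd : NotNonposInt d) (hb : NotNonposInt b) {x : ℝ} (hx : |x| < 1) :
    Summable (fun n : ℕ => poch c n * poch q n / (poch d n * poch b n) * x ^ n) := by
  set r : ℝ := (1 + |x|) / 2 with hr
  have hr1 : r < 1 := by rw [hr]; linarith
  have hxr : |x| < r := by rw [hr]; linarith
  apply summable_of_ratio_norm_eventually_le hr1
  have ht : Filter.Tendsto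
      (fun n : ℕ => |(c + n) / (d + n) * ((q + n) / (b + n))| * |x|) Filter.atTop (nhds |x|) := by
    have := (((ratio_tendsto c d hd).mul (ratio_tendsto q b hb)).abs).mul_const |x|
    simpa using this
  have hev : ∀ᶠ n : ℕ in Filter.atTop,
      |(c + n) / (d + n) * ((q + n) / (b + n))| * |x| ≤ r :=
    (ht.eventually_lt_const hxr).mono (fun n h => le_of_lt h)
  filter_upwards [hev] with n h
  have hdn := add_nat_ne_zero hd n
  have hbn := add_nat_ne_zero hb n
  have key : poch c (n+1) * poch q (n+1) / (poch d (n+1) * poch b (n+1)) * x ^ (n+1)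
      = ((c + n) / (d + n) * ((q + n) / (b + n)) * x) *
        (poch c n * poch q n / (poch d n * poch b n) * x ^ n) := by
    rw [poch_succ, poch_succ, poch_succ, poch_succ]
    by_cases hD : poch d n * poch b n = 0
    · rcases mul_eq_zero.1 hD with h0 | h0 <;>
        simp [h0, pow_succ, mul_comm, mul_assoc, mul_left_comm]
    · have h1 : poch d n ≠ 0 := fun h => hD (by simp [h])
      have h2 : poch b n ≠ 0 := fun h => hD (by simp [h])
      field_simp
      ring
  rw [key, norm_mul]
  have habs : ‖(c + ↑n) / (d + ↑n) * ((q + ↑n) / (b + ↑n)) * x‖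
      = |(c + n) / (d + n) * ((q + n) / (b + n))| * |x| := by
    simp [abs_mul, abs_div]
  rw [habs]
  exact mul_le_mul_of_nonneg_right h (norm_nonneg _)

lemma tsum_telescope' {p : ℕ → ℝ} (hp : Summable p) : ∑' n, (p n - p (n+1)) = p 0 := by
  have h0 : Filter.Tendsto p Filter.atTop (nhds 0) := hp.tendsto_atTop_zero
  have hs : Summable (fun n => p n - p (n+1)) :=
    hp.sub ((summable_nat_add_iff 1).2 hp)
  have ht := hs.hasSum.tendsto_sum_nat
  have key : ∀ N, ∑ i ∈ Finset.range N, (p i - p (i+1)) = p 0 - p N :=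
    fun N => Finset.sum_range_sub' p N
  have ht2 : Filter.Tendsto (fun N => ∑ i ∈ Finset.range N, (p i - p (i+1)))
      Filter.atTop (nhds (p 0)) := by
    simp only [key]
    simpa using tendsto_const_nhds.sub h0
  exact tendsto_nhds_unique ht ht2

lemma key_identity (a b c q x : ℝ) (ha2 : NotNonposInt (a - 2)) (ha1 : NotNonposInt (a - 1))
    (ha : NotNonposInt a) (hb : NotNonposInt b) (n : ℕ) :
    (a - 2) * (a - 1) * (1 - x) * (poch c n * poch q n / (poch (a-2) n * poch b n) * x ^ n)
      + (a - 1) * ((2 * a - c - q - 3) * x - a + b + 1) *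
          (poch c n * poch q n / (poch (a-1) n * poch b n) * x ^ n)
      - (a - q - 1) * (a - c - 1) * x * (poch c n * poch q n / (poch a n * poch b n) * x ^ n)
    = ((a-2)*(a-1) * (poch c n * poch q n / (poch (a-2) n * poch b n))
        + (a-1)*(b+1-a) * (poch c n * poch q n / (poch (a-1) n * poch b n))) * x ^ n
      - ((a-2)*(a-1) * (poch c (n+1) * poch q (n+1) / (poch (a-2) (n+1) * poch b (n+1)))
        + (a-1)*(b+1-a) * (poch c (n+1) * poch q (n+1) / (poch (a-1) (n+1) * poch b (n+1)))) * x ^ (n+1) := by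
  have e1 : poch (a-1) n * ((a-1) + n) = (a-1) * poch a n := by
    have := poch_shift (a-1) n; rw [show a - 1 + 1 = a by ring] at this; exact this
  have e2 : poch (a-2) n * ((a-2) + n) = (a-2) * poch (a-1) n := by
    have := poch_shift (a-2) n; rw [show a - 2 + 1 = a - 1 by ring] at this; exact this
  have h1n := add_nat_ne_zero ha1 n
  have h2n := add_nat_ne_zero ha2 n
  have hbn := add_nat_ne_zero hb n
  have hp0 := poch_ne_zero ha n
  have hp1 := poch_ne_zero ha1 n
  have hp2 := poch_ne_zero ha2 n
  have hpb := poch_ne_zero hb n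
  have h2 : (a:ℝ) - 2 ≠ 0 := self_ne_zero ha2
  have h1 : (a:ℝ) - 1 ≠ 0 := self_ne_zero ha1
  have r2 : poch c n * poch q n / (poch (a-2) n * poch b n)
      = ((a-2)+n) * ((a-1)+n) / ((a-2)*(a-1)) * (poch c n * poch q n / (poch a n * poch b n)) := by
    rw [div_mul_div_comm, div_eq_div_iff (mul_ne_zero hp2 hpb)
      (mul_ne_zero (mul_ne_zero h2 h1) (mul_ne_zero hp0 hpb))]
    linear_combination (-(poch c n * poch q n * poch b n * ((a-1)+(n:ℝ)))) * e2
      + (-(poch c n * poch q n * poch b n * (a-2))) * e1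
  have r1 : poch c n * poch q n / (poch (a-1) n * poch b n)
      = ((a-1)+n) / (a-1) * (poch c n * poch q n / (poch a n * poch b n)) := by
    rw [div_mul_div_comm, div_eq_div_iff (mul_ne_zero hp1 hpb)
      (mul_ne_zero h1 (mul_ne_zero hp0 hpb))]
    linear_combination (-(poch c n * poch q n * poch b n)) * e1
  have r2' : poch c (n+1) * poch q (n+1) / (poch (a-2) (n+1) * poch b (n+1))
      = (c+n)*(q+n)*((a-1)+n) / ((a-2)*(a-1)*(b+n))
        * (poch c n * poch q n / (poch a n * poch b n)) := by
    simp only [poch_succ]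
    rw [div_mul_div_comm, div_eq_div_iff
      (mul_ne_zero (mul_ne_zero hp2 h2n) (mul_ne_zero hpb hbn))
      (mul_ne_zero (mul_ne_zero (mul_ne_zero h2 h1) hbn) (mul_ne_zero hp0 hpb))]
    linear_combination
      (-(poch c n * poch q n * poch b n * (c+(n:ℝ)) * (q+(n:ℝ)) * (b+(n:ℝ)) * ((a-1)+(n:ℝ)))) * e2
      + (-(poch c n * poch q n * poch b n * (c+(n:ℝ)) * (q+(n:ℝ)) * (b+(n:ℝ)) * (a-2))) * e1
  have r1' : poch c (n+1) * poch q (n+1) / (poch (a-1) (n+1) * poch b (n+1))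
      = (c+n)*(q+n) / ((a-1)*(b+n)) * (poch c n * poch q n / (poch a n * poch b n)) := by
    simp only [poch_succ]
    rw [div_mul_div_comm, div_eq_div_iff
      (mul_ne_zero (mul_ne_zero hp1 h1n) (mul_ne_zero hpb hbn))
      (mul_ne_zero (mul_ne_zero h1 hbn) (mul_ne_zero hp0 hpb))]
    linear_combination (-(poch c n * poch q n * poch b n * (c+(n:ℝ)) * (q+(n:ℝ)) * (b+(n:ℝ)))) * e1
  rw [r2, r1, r2', r1']
  generalize poch c n * poch q n / (poch a n * poch b n) = T
  rw [pow_succ]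
  field_simp
  ring

lemma F32_eq (b c q d x : ℝ) :
    F32 1 c q d b x = ∑' n : ℕ, poch c n * poch q n / (poch d n * poch b n) * x ^ n := by
  unfold F32
  refine tsum_congr (fun n => ?_)
  rw [poch_one_eq]
  congr 1
  have hf : (n.factorial : ℝ) ≠ 0 := Nat.cast_ne_zero.2 n.factorial_ne_zero
  by_cases hD : poch d n * poch b n = 0
  · simp [hD]
  · field_simp

/-- Three-term contiguous relation in the lower parameter `a` for
`F_a(x) = ₃F₂(1,c,q; a,b; x)`, valid for `|x| < 1`. -/
theorem stmt2 (a b c q x : ℝ) (ha2 : NotNonposInt (a - 2)) (ha1 : NotNonposInt (a - 1))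
    (ha : NotNonposInt a) (hb : NotNonposInt b) (hx : |x| < 1) :
    (a - 2) * (a - 1) * (1 - x) * F32 1 c q (a - 2) b x
      + (a - 1) * ((2 * a - c - q - 3) * x - a + b + 1) * F32 1 c q (a - 1) b x
      - (a - q - 1) * (a - c - 1) * x * F32 1 c q a b x
      = (a - 1) * (b - 1) := by
  have S2 := summable_u (b := b) (c := c) (q := q) ha2 hb hx
  have S1 := summable_u (b := b) (c := c) (q := q) ha1 hb hx
  have S0 := summable_u (b := b) (c := c) (q := q) ha hb hx
  set p : ℕ → ℝ := fun n =>
    ((a-2)*(a-1) * (poch c n * poch q n / (poch (a-2) n * poch b n))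
      + (a-1)*(b+1-a) * (poch c n * poch q n / (poch (a-1) n * poch b n))) * x ^ n with hp
  have Sp : Summable p := by
    apply Summable.congr ((S2.mul_left ((a-2)*(a-1))).add (S1.mul_left ((a-1)*(b+1-a))))
    intro n
    simp only [hp]
    ring
  have step1 : (a - 2) * (a - 1) * (1 - x) * F32 1 c q (a - 2) b x
      + (a - 1) * ((2 * a - c - q - 3) * x - a + b + 1) * F32 1 c q (a - 1) b x
      - (a - q - 1) * (a - c - 1) * x * F32 1 c q a b x
      = ∑' n : ℕ,
        ((a - 2) * (a - 1) * (1 - x) * (poch c n * poch q n / (poch (a-2) n * poch b n) * x ^ n)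
          + (a - 1) * ((2 * a - c - q - 3) * x - a + b + 1) *
              (poch c n * poch q n / (poch (a-1) n * poch b n) * x ^ n)
          - (a - q - 1) * (a - c - 1) * x *
              (poch c n * poch q n / (poch a n * poch b n) * x ^ n)) := by
    rw [F32_eq, F32_eq, F32_eq, ← tsum_mul_left, ← tsum_mul_left, ← tsum_mul_left,
      ← Summable.tsum_add (S2.mul_left _) (S1.mul_left _),
      ← Summable.tsum_sub ((S2.mul_left _).add (S1.mul_left _)) (S0.mul_left _)]
  rw [step1]
  have step2 : ∀ n : ℕ,
      (a - 2) * (a - 1) * (1 - x) * (poch c n * poch q n / (poch (a-2) n * poch b n) * x ^ n)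
        + (a - 1) * ((2 * a - c - q - 3) * x - a + b + 1) *
            (poch c n * poch q n / (poch (a-1) n * poch b n) * x ^ n)
        - (a - q - 1) * (a - c - 1) * x * (poch c n * poch q n / (poch a n * poch b n) * x ^ n)
      = p n - p (n+1) := fun n => key_identity a b c q x ha2 ha1 ha hb n
  rw [tsum_congr step2, tsum_telescope' Sp]
  simp only [hp, poch_zero', pow_zero]
  ring
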